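/- arXiv:2310.03988 — 3 statements merged into one kernel-verified Lean document; each statement's English description precedes it below -/
import Mathlib

section
/- For the Erdős–Rényi random graph $G(n,p)$ with adjacency matrix $A$, the hyper-Zagreb index $\mathcal{I}_n=\sum_{i<j} A_{ij}(d_i+d_j)^2$ (where $d_i=\sum_{k\ne i}A_{ik}$) has expectation $\mathbb{E}[\mathcal{I}_n]=n(n-1)(n-2)(2n-5)p^3+5n(n-1)(n-2)p^2+2n(n-1)p$. -/
/-!
For an edge `ij`, the degrees satisfy `dᵢ + dⱼ = 2 Aᵢⱼ + Sᵢⱼ`, where `Sᵢⱼ` is the sum of the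
`m = 2(n - 2)` indicators of the edges joining `{i, j}` to the other vertices. As `Aᵢⱼ ∈ {0, 1}`,
`Aᵢⱼ (dᵢ + dⱼ)² = Aᵢⱼ (2 + Sᵢⱼ)²`, and `Aᵢⱼ` is independent of the binomial variable `Sᵢⱼ`, whose
first two moments are `m p` and `m p + m (m - 1) p²`. Hence each of the `n (n - 1) / 2` edges
contributes `p (4 + 5 m p + m (m - 1) p²)`.
-/

open MeasureTheory ProbabilityTheory Finset

section ZeroOne

variable {Ω : Type*} [MeasurableSpace Ω] {μ : Measure Ω} {Y : Ω → ℝ}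

lemma memLp_top_of_zero_or_one [IsFiniteMeasure μ] (hY : Measurable Y)
    (h01 : ∀ ω, Y ω = 0 ∨ Y ω = 1) : MemLp Y ⊤ μ :=
  .of_bound hY.aestronglyMeasurable 1 <| ae_of_all _ fun ω => by
    rcases h01 ω with h | h <;> simp [h]

lemma integral_eq_of_zero_or_one {p : ℝ} (hp : 0 ≤ p) (hY : Measurable Y)
    (h01 : ∀ ω, Y ω = 0 ∨ Y ω = 1) (h1 : μ {ω | Y ω = 1} = ENNReal.ofReal p) :
    ∫ ω, Y ω ∂μ = p := by
  have hind : Y = (Y ⁻¹' {1}).indicator 1 := by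
    ext ω
    rcases h01 ω with h | h <;> simp [h]
  rw [hind, integral_indicator_one (hY (measurableSet_singleton 1)), measureReal_def]
  exact (congrArg ENNReal.toReal h1).trans (ENNReal.toReal_ofReal hp)

end ZeroOne

section BernoulliFamily

variable {Ω ι : Type*} [MeasurableSpace Ω] {μ : Measure Ω} {X : ι → Ω → ℝ} {p : ℝ}

lemma integral_mul_eq_ite_of_iIndepFun [DecidableEq ι] (hX : iIndepFun X μ)
    (hmeas : ∀ f, Measurable (X f)) (h01 : ∀ f ω, X f ω = 0 ∨ X f ω = 1)
    (hmean : ∀ f, ∫ ω, X f ω ∂μ = p) (f g : ι) :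
    ∫ ω, X f ω * X g ω ∂μ = if f = g then p else p ^ 2 := by
  split_ifs with hfg
  · subst hfg
    have hidem : ∀ ω, X f ω * X f ω = X f ω := fun ω => by
      rcases h01 f ω with h | h <;> simp [h]
    simp only [hidem, hmean]
  · have := (hX.indepFun hfg).integral_mul_eq_mul_integral
      (hmeas f).aestronglyMeasurable (hmeas g).aestronglyMeasurable
    simp only [Pi.mul_apply] at this
    rw [this, hmean, hmean, sq]

lemma integral_sum_sq_of_iIndepFun [IsFiniteMeasure μ] (hX : iIndepFun X μ)
    (hmeas : ∀ f, Measurable (X f)) (h01 : ∀ f ω, X f ω = 0 ∨ X f ω = 1)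
    (hmean : ∀ f, ∫ ω, X f ω ∂μ = p) (s : Finset ι) :
    ∫ ω, (∑ f ∈ s, X f ω) ^ 2 ∂μ = #s * p + #s * (#s - 1) * p ^ 2 := by
  classical
  have hL : ∀ f, MemLp (X f) ⊤ μ := fun f => memLp_top_of_zero_or_one (hmeas f) (h01 f)
  have hint : ∀ f g, Integrable (fun ω => X f ω * X g ω) μ := fun f g =>
    ((hL g).mul (hL f)).integrable le_top
  have hrow : ∀ f ∈ s, ∑ g ∈ s, (if f = g then p else p ^ 2) = p + (#s - 1) * p ^ 2 := by
    intro f hf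
    rw [← sum_erase_add s _ hf, if_pos rfl,
      sum_congr rfl fun g hg => if_neg (ne_of_mem_erase hg).symm, sum_const,
      card_erase_of_mem hf, nsmul_eq_mul, Nat.cast_sub (card_pos.2 ⟨f, hf⟩)]
    ring
  simp_rw [sq, sum_mul_sum]
  rw [integral_finsetSum _ fun f _ => integrable_finsetSum _ fun g _ => hint f g]
  simp_rw [integral_finsetSum _ fun g _ => hint _ g, integral_mul_eq_ite_of_iIndepFun hX hmeas h01 hmean]
  rw [sum_congr rfl hrow, sum_const, nsmul_eq_mul]
  ring

lemma integrable_mul_sq_two_add_sum_of_zero_or_one [IsFiniteMeasure μ]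
    (hmeas : ∀ f, Measurable (X f)) (h01 : ∀ f ω, X f ω = 0 ∨ X f ω = 1) (e : ι) (s : Finset ι) :
    Integrable (fun ω => X e ω * (2 + ∑ f ∈ s, X f ω) ^ 2) μ := by
  have hL : ∀ f, MemLp (X f) ⊤ μ := fun f => memLp_top_of_zero_or_one (hmeas f) (h01 f)
  have hT : MemLp (fun ω => 2 + ∑ f ∈ s, X f ω) ⊤ μ :=
    (memLp_const (2 : ℝ)).add (memLp_finsetSum s fun f _ => hL f)
  exact (((hT.mul (r := ⊤) hT).mul (r := ⊤) (hL e)).integrable le_top).congr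
    (ae_of_all _ fun ω => by simp only [Pi.mul_apply, sq])

lemma integral_mul_sq_two_add_sum_of_iIndepFun [IsProbabilityMeasure μ] (hX : iIndepFun X μ)
    (hmeas : ∀ f, Measurable (X f)) (h01 : ∀ f ω, X f ω = 0 ∨ X f ω = 1)
    (hmean : ∀ f, ∫ ω, X f ω ∂μ = p) {e : ι} {s : Finset ι} (he : e ∉ s) :
    ∫ ω, X e ω * (2 + ∑ f ∈ s, X f ω) ^ 2 ∂μ = p * (4 + 5 * #s * p + #s * (#s - 1) * p ^ 2) := by
  have hL : ∀ f, MemLp (X f) ⊤ μ := fun f => memLp_top_of_zero_or_one (hmeas f) (h01 f)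
  have hSL : MemLp (fun ω => ∑ f ∈ s, X f ω) ⊤ μ := memLp_finsetSum s fun f _ => hL f
  have hS2int : Integrable (fun ω => (∑ f ∈ s, X f ω) ^ 2) μ :=
    (hSL.mono_exponent le_top).integrable_sq
  have hlin : Integrable (fun ω => 4 + 4 * ∑ f ∈ s, X f ω) μ :=
    (integrable_const _).add ((hSL.integrable le_top).const_mul 4)
  have hmoment : ∫ ω, (2 + ∑ f ∈ s, X f ω) ^ 2 ∂μ
      = 4 + 4 * (#s * p) + (#s * p + #s * (#s - 1) * p ^ 2) := by
    have hexp : ∀ ω, (2 + ∑ f ∈ s, X f ω) ^ 2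
        = (4 + 4 * ∑ f ∈ s, X f ω) + (∑ f ∈ s, X f ω) ^ 2 := fun ω => by ring
    simp_rw [hexp]
    rw [integral_add hlin hS2int, integral_add (integrable_const _)
      ((hSL.integrable le_top).const_mul 4), integral_const_mul,
      integral_finsetSum _ fun f _ => (hL f).integrable le_top,
      integral_sum_sq_of_iIndepFun hX hmeas h01 hmean]
    simp [hmean]
  have hindep : IndepFun (X e) (fun ω => (2 + ∑ f ∈ s, X f ω) ^ 2) μ := by
    have := (hX.indepFun_finsetSum_of_notMem hmeas he).symm.comp measurable_id
      (show Measurable fun x : ℝ => (2 + x) ^ 2 by fun_prop)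
    convert this using 1 <;> ext ω <;> simp only [id, Function.comp_apply, Finset.sum_apply]
  have := hindep.integral_mul_eq_mul_integral (hmeas e).aestronglyMeasurable
    (by fun_prop : Measurable fun ω => (2 + ∑ f ∈ s, X f ω) ^ 2).aestronglyMeasurable
  simp only [Pi.mul_apply] at this
  rw [this, hmean, hmoment]
  ring

end BernoulliFamily

section CompleteGraph

variable {n : ℕ}

def edge (a b : Fin n) (h : a ≠ b) : {e : Fin n × Fin n // e.1 < e.2} :=
  if hab : a < b then ⟨(a, b), hab⟩ else ⟨(b, a), lt_of_le_of_ne (not_lt.mp hab) h.symm⟩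

lemma edge_of_lt {a b : Fin n} (h : a < b) : edge a b h.ne = ⟨(a, b), h⟩ := dif_pos h

lemma apply_edge {α : Type*} {F : Fin n → Fin n → α} (hF : ∀ a b, F a b = F b a) {a b : Fin n}
    (h : a ≠ b) : F (edge a b h).1.1 (edge a b h).1.2 = F a b := by
  unfold edge
  split_ifs
  · rfl
  · exact hF b a

lemma eq_and_eq_or_eq_and_eq_of_edge_eq {a b c d : Fin n} {hab : a ≠ b} {hcd : c ≠ d}
    (H : edge a b hab = edge c d hcd) : a = c ∧ b = d ∨ a = d ∧ b = c := by
  unfold edge at H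
  split_ifs at H <;> simp only [Subtype.mk.injEq, Prod.mk.injEq] at H <;> tauto

def crossingEdge (T : Finset (Fin n)) (x : T ×ˢ Tᶜ) : {e : Fin n × Fin n // e.1 < e.2} :=
  edge x.1.1 x.1.2 <|
    ne_of_mem_of_not_mem (mem_product.1 x.2).1 (mem_compl.1 (mem_product.1 x.2).2)

def cutEdges (T : Finset (Fin n)) : Finset {e : Fin n × Fin n // e.1 < e.2} :=
  (T ×ˢ Tᶜ).attach.image (crossingEdge T)

lemma crossingEdge_injective (T : Finset (Fin n)) : Function.Injective (crossingEdge T) := by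
  rintro ⟨⟨a, b⟩, hx⟩ ⟨⟨c, d⟩, hy⟩ H
  simp only [mem_product, mem_compl] at hx hy
  rcases eq_and_eq_or_eq_and_eq_of_edge_eq H with ⟨rfl, rfl⟩ | ⟨rfl, -⟩
  · rfl
  · exact absurd hx.1 hy.2

lemma card_cutEdges (T : Finset (Fin n)) : #(cutEdges T) = #T * (n - #T) := by
  rw [cutEdges, card_image_of_injective _ (crossingEdge_injective T), card_attach, card_product,
    card_compl, Fintype.card_fin]

lemma sum_cutEdges {M : Type*} [AddCommMonoid M] {F : Fin n → Fin n → M}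
    (hF : ∀ a b, F a b = F b a) (T : Finset (Fin n)) :
    ∑ e ∈ cutEdges T, F e.1.1 e.1.2 = ∑ a ∈ T, ∑ k ∈ Tᶜ, F a k := by
  rw [cutEdges, sum_image fun x _ y _ H => crossingEdge_injective T H, ← sum_product']
  simp only [crossingEdge, apply_edge hF]
  exact sum_attach (T ×ˢ Tᶜ) fun x => F x.1 x.2

lemma edge_notMem_cutEdges {T : Finset (Fin n)} {a b : Fin n} (ha : a ∈ T) (hb : b ∈ T)
    (h : a ≠ b) : edge a b h ∉ cutEdges T := by
  simp only [cutEdges, crossingEdge, mem_image, mem_attach, true_and, not_exists]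
  rintro ⟨⟨c, d⟩, hx⟩ H
  simp only [mem_product, mem_compl] at hx
  rcases eq_and_eq_or_eq_and_eq_of_edge_eq H with ⟨-, rfl⟩ | ⟨-, rfl⟩
  · exact hx.2 hb
  · exact hx.2 ha

lemma sum_sum_eq_add_sum_cutEdges {M : Type*} [AddCommMonoid M] {F : Fin n → Fin n → M}
    (hF : ∀ a b, F a b = F b a) (T : Finset (Fin n)) :
    ∑ a ∈ T, ∑ k, F a k = ∑ a ∈ T, ∑ k ∈ T, F a k + ∑ e ∈ cutEdges T, F e.1.1 e.1.2 := by
  simp_rw [sum_cutEdges hF, ← sum_add_distrib, sum_add_sum_compl]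

lemma mul_sq_sum_add_sum_eq {F : Fin n → Fin n → ℝ} (hF : ∀ a b, F a b = F b a)
    (hdiag : ∀ a, F a a = 0) {i j : Fin n} (hij : i ≠ j) (h01 : F i j = 0 ∨ F i j = 1) :
    F i j * (∑ k, F i k + ∑ k, F j k) ^ 2
      = F i j * (2 + ∑ e ∈ cutEdges {i, j}, F e.1.1 e.1.2) ^ 2 := by
  have hcut := sum_sum_eq_add_sum_cutEdges hF {i, j}
  simp only [sum_pair hij, hdiag, hF j i] at hcut
  rw [hcut]
  rcases h01 with h | h <;> rw [h] <;> ring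

end CompleteGraph

section RandomGraph

variable {Ω : Type*} {n : ℕ} {A : Fin n → Fin n → Ω → ℝ}

lemma edge_mul_sq_degree_add_degree_eq (hAsymm : ∀ i j, A i j = A j i)
    (hdiag : ∀ i ω, A i i ω = 0) (h01 : ∀ i j, i < j → ∀ ω, A i j ω = 0 ∨ A i j ω = 1)
    {i j : Fin n} (hij : i < j) :
    (fun ω => A i j ω * (∑ k, A i k ω + ∑ k, A j k ω) ^ 2)
      = fun ω => A i j ω * (2 + ∑ e ∈ cutEdges {i, j}, A e.1.1 e.1.2 ω) ^ 2 :=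
  funext fun ω => mul_sq_sum_add_sum_eq (fun a b => congrFun (hAsymm a b) ω) (hdiag · ω) hij.ne
    (h01 i j hij ω)

variable [MeasurableSpace Ω] {μ : Measure Ω}

lemma integrable_edge_mul_sq_degree_add_degree [IsFiniteMeasure μ]
    (hAsymm : ∀ i j, A i j = A j i) (hdiag : ∀ i ω, A i i ω = 0)
    (hmeas : ∀ i j, Measurable (A i j)) (h01 : ∀ i j, i < j → ∀ ω, A i j ω = 0 ∨ A i j ω = 1)
    {i j : Fin n} (hij : i < j) :
    Integrable (fun ω => A i j ω * (∑ k, A i k ω + ∑ k, A j k ω) ^ 2) μ := by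
  rw [edge_mul_sq_degree_add_degree_eq hAsymm hdiag h01 hij]
  exact integrable_mul_sq_two_add_sum_of_zero_or_one
    (X := fun e : {e : Fin n × Fin n // e.1 < e.2} => A e.1.1 e.1.2) (fun e => hmeas _ _)
    (fun e => h01 _ _ e.2) ⟨(i, j), hij⟩ _

lemma integral_edge_mul_sq_degree_add_degree [IsProbabilityMeasure μ] {p : ℝ}
    (hAsymm : ∀ i j, A i j = A j i) (hdiag : ∀ i ω, A i i ω = 0)
    (hmeas : ∀ i j, Measurable (A i j)) (h01 : ∀ i j, i < j → ∀ ω, A i j ω = 0 ∨ A i j ω = 1)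
    (hmean : ∀ i j, i < j → ∫ ω, A i j ω ∂μ = p)
    (hindep : iIndepFun (fun e : {e : Fin n × Fin n // e.1 < e.2} => A e.1.1 e.1.2) μ)
    {i j : Fin n} (hij : i < j) :
    ∫ ω, A i j ω * (∑ k, A i k ω + ∑ k, A j k ω) ^ 2 ∂μ
      = p * (4 + 10 * ((n : ℝ) - 2) * p + 2 * ((n : ℝ) - 2) * (2 * n - 5) * p ^ 2) := by
  have h2n : 2 ≤ n := by have := j.isLt; have := Fin.lt_def.1 hij; omega
  have hcard : (#(cutEdges {i, j}) : ℝ) = 2 * ((n : ℝ) - 2) := by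
    rw [card_cutEdges, card_pair hij.ne, Nat.cast_mul, Nat.cast_sub h2n]
    norm_num
  have hnotMem : (⟨(i, j), hij⟩ : {e : Fin n × Fin n // e.1 < e.2}) ∉ cutEdges {i, j} := by
    simpa only [edge_of_lt hij] using
      edge_notMem_cutEdges (mem_insert_self i {j}) (mem_insert_of_mem (mem_singleton_self j)) hij.ne
  rw [edge_mul_sq_degree_add_degree_eq hAsymm hdiag h01 hij,
    integral_mul_sq_two_add_sum_of_iIndepFun hindep (fun e => hmeas _ _) (fun e => h01 _ _ e.2)
      (fun e => hmean _ _ e.2) hnotMem, hcard]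
  ring

end RandomGraph

theorem stmt7 {Ω : Type*} [MeasureSpace Ω] [IsProbabilityMeasure (ℙ : Measure Ω)]
    (n : ℕ) (p : ℝ) (hp : p ∈ Set.Icc (0:ℝ) 1)
    (A : Fin n → Fin n → Ω → ℝ)
    (hAsymm : ∀ i j, A i j = A j i) (hdiag : ∀ i ω, A i i ω = 0)
    (hmeas : ∀ i j, Measurable (A i j))
    (h01 : ∀ i j, i < j → ∀ ω, A i j ω = 0 ∨ A i j ω = 1)
    (hber : ∀ i j, i < j → ℙ {ω | A i j ω = 1} = ENNReal.ofReal p)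
    (hindep : iIndepFun
      (fun e : {e : Fin n × Fin n // e.1 < e.2} => A e.1.1 e.1.2) ℙ) :
    let d : Fin n → Ω → ℝ := fun i ω => ∑ k, if k ≠ i then A i k ω else 0
    (∫ ω, (∑ i, ∑ j, if i < j then A i j ω * (d i ω + d j ω)^2 else 0) ∂ℙ)
      = (n:ℝ) * ((n:ℝ)-1) * ((n:ℝ)-2) * (2*(n:ℝ)-5) * p^3
        + 5 * (n:ℝ) * ((n:ℝ)-1) * ((n:ℝ)-2) * p^2 + 2 * (n:ℝ) * ((n:ℝ)-1) * p := by
  intro d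
  have hdeg : ∀ i ω, d i ω = ∑ k, A i k ω := fun i ω => by
    simp only [d, ← sum_filter, filter_ne', sum_erase (f := fun k => A i k ω) _ (hdiag i ω)]
  have hmean : ∀ i j, i < j → ∫ ω, A i j ω = p := fun i j hij =>
    integral_eq_of_zero_or_one hp.1 (hmeas i j) (h01 i j hij) (hber i j hij)
  have hpairs : ∀ ω, (∑ i, ∑ j, if i < j then A i j ω * (d i ω + d j ω) ^ 2 else 0)
      = ∑ x ∈ (univ ×ˢ univ : Finset (Fin n × Fin n)) with x.1 < x.2,
          A x.1 x.2 ω * (∑ k, A x.1 k ω + ∑ k, A x.2 k ω) ^ 2 := fun ω => by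
    simp only [hdeg, sum_filter, sum_product]
  simp only [hpairs]
  rw [integral_finsetSum _ fun x hx => integrable_edge_mul_sq_degree_add_degree hAsymm hdiag
      hmeas h01 (mem_filter.1 hx).2,
    sum_congr rfl fun x hx => integral_edge_mul_sq_degree_add_degree hAsymm hdiag hmeas h01 hmean
      hindep (mem_filter.1 hx).2,
    sum_const, card_product_filter_lt, card_univ, Fintype.card_fin, nsmul_eq_mul,
    Nat.cast_choose_two]
  ring
end

section
/- Let $X=\sum_{l=1}^m B_l$ with $B_l$ independent Bernoulli, $p\beta\le \mathbb{P}(B_l=1)\le p$, where $\beta\in(0,1]$ is constant and $mp=\omega(\log m)$ as $m\to\infty$. Let $\delta_m=(\log(mp))^{-2}$. Then for every integer $k\le \delta_m\, mp$, $\mathbb{P}(X=k)\le \exp\big(-mp\beta(1+o(1))\big)$; i.e., for every $\epsilon>0$ there is $m_0$ such that for all $m\ge m_0$ and all $k\le \delta_m mp$, $\mathbb{P}(X=k)\le \exp(-(1-\epsilon)mp\beta)$. -/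
/-!
Chernoff's lower-tail bound at `t = -log N`, where `N = m p`: each Bernoulli factor of the
moment generating function is at most `exp (-(1 - e^t) p β)`, so
`P(X ≤ k) ≤ exp (k log N - (N - 1) β)`. For `k ≤ N / (log N)^2` the term `k log N ≤ N / log N`
is `o(N)`, and `mp / log m → ∞` forces `N → ∞`.
-/

open MeasureTheory ProbabilityTheory Filter Real

section Bernoulli

variable {Ω : Type*} {mΩ : MeasurableSpace Ω} {μ : Measure Ω} {B : Ω → ℝ}

lemma exp_mul_eq_one_add_mul_indicator (h01 : ∀ ω, B ω = 0 ∨ B ω = 1) (t : ℝ) :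
    (fun ω => exp (t * B ω)) = fun ω => 1 + (exp t - 1) * {ω | B ω = 1}.indicator 1 ω := by
  funext ω
  rcases h01 ω with h | h <;> simp [h]

lemma integrable_exp_mul_of_zero_or_one [IsFiniteMeasure μ] (hB : Measurable B)
    (h01 : ∀ ω, B ω = 0 ∨ B ω = 1) (t : ℝ) : Integrable (fun ω => exp (t * B ω)) μ := by
  rw [exp_mul_eq_one_add_mul_indicator h01]
  exact (integrable_const 1).add
    (((integrable_const 1).indicator (hB (measurableSet_singleton 1))).const_mul _)

lemma mgf_of_zero_or_one [IsProbabilityMeasure μ] (hB : Measurable B)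
    (h01 : ∀ ω, B ω = 0 ∨ B ω = 1) (t : ℝ) :
    mgf B μ t = 1 + (exp t - 1) * μ.real {ω | B ω = 1} := by
  have hs : MeasurableSet {ω | B ω = 1} := hB (measurableSet_singleton 1)
  rw [mgf, exp_mul_eq_one_add_mul_indicator h01, integral_add (integrable_const 1)
    (((integrable_const 1).indicator hs).const_mul _), integral_const_mul,
    integral_indicator_one hs, integral_const, probReal_univ, one_smul]

lemma mgf_le_exp_of_zero_or_one [IsProbabilityMeasure μ] (hB : Measurable B)
    (h01 : ∀ ω, B ω = 0 ∨ B ω = 1) {a t : ℝ} (ha : a ≤ μ.real {ω | B ω = 1}) (ht : t ≤ 0) :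
    mgf B μ t ≤ exp (-(1 - exp t) * a) := by
  have hexp : exp t ≤ 1 := exp_le_one_iff.2 ht
  calc mgf B μ t = 1 + (exp t - 1) * μ.real {ω | B ω = 1} := mgf_of_zero_or_one hB h01 t
    _ ≤ exp ((exp t - 1) * μ.real {ω | B ω = 1}) := by
        linarith [add_one_le_exp ((exp t - 1) * μ.real {ω | B ω = 1})]
    _ ≤ exp (-(1 - exp t) * a) := exp_le_exp.2 (by nlinarith)

end Bernoulli

lemma measureReal_sum_le_le_exp {Ω ι : Type*} {mΩ : MeasurableSpace Ω} {μ : Measure Ω}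
    [Fintype ι] {B : ι → Ω → ℝ} (hindep : iIndepFun B μ) (hmeas : ∀ i, Measurable (B i))
    (h01 : ∀ i ω, B i ω = 0 ∨ B i ω = 1) {a : ℝ} (ha : ∀ i, a ≤ μ.real {ω | B i ω = 1})
    {t : ℝ} (ht : t ≤ 0) (x : ℝ) :
    μ.real {ω | ∑ i, B i ω ≤ x} ≤ exp (-t * x - (1 - exp t) * Fintype.card ι * a) := by
  have := hindep.isProbabilityMeasure
  have hint := hindep.integrable_exp_mul_sum (t := t) hmeas (s := Finset.univ)
    fun i _ => integrable_exp_mul_of_zero_or_one (hmeas i) (h01 i) t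
  have hprod : ∏ i, mgf (B i) μ t ≤ exp (-(1 - exp t) * Fintype.card ι * a) := by
    calc ∏ i, mgf (B i) μ t ≤ ∏ _i : ι, exp (-(1 - exp t) * a) :=
          Finset.prod_le_prod (fun i _ => mgf_nonneg)
            fun i _ => mgf_le_exp_of_zero_or_one (hmeas i) (h01 i) (ha i) ht
      _ = exp (-(1 - exp t) * Fintype.card ι * a) := by
          rw [Finset.prod_const, Finset.card_univ, ← exp_nat_mul]
          ring_nf
  calc μ.real {ω | ∑ i, B i ω ≤ x} ≤ exp (-t * x) * mgf (∑ i, B i) μ t := by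
        simpa only [Finset.sum_apply] using measure_le_le_exp_mul_mgf x ht hint
    _ ≤ exp (-t * x) * exp (-(1 - exp t) * Fintype.card ι * a) := by
        rw [hindep.mgf_sum hmeas]
        exact mul_le_mul_of_nonneg_left hprod (exp_pos _).le
    _ = exp (-t * x - (1 - exp t) * Fintype.card ι * a) := by rw [← exp_add]; ring_nf

lemma Filter.Tendsto.atTop_of_div_atTop {α : Type*} {l : Filter α} {f g : α → ℝ}
    (h : Tendsto (fun x => f x / g x) l atTop) (hg : Tendsto g l atTop) : Tendsto f l atTop := by
  refine (h.atTop_mul_atTop₀ hg).congr' ?_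
  filter_upwards [hg.eventually_gt_atTop 0] with x hx
  exact div_mul_cancel₀ _ hx.ne'

lemma eventually_log_mul_sub_le {β ε : ℝ} (hβ : 0 < β) (hε : 0 < ε) :
    ∀ᶠ N : ℝ in atTop, ∀ k : ℝ, k ≤ (log N)⁻¹ ^ 2 * N →
      log N * k - (N - 1) * β ≤ -(1 - ε) * N * β := by
  have hεβ : 0 < ε * β := mul_pos hε hβ
  filter_upwards [tendsto_log_atTop.eventually_ge_atTop (2 / (ε * β)),
    eventually_ge_atTop (2 / ε), eventually_gt_atTop 0] with N hlog hN hN0 k hk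
  have hlog0 : 0 < log N := lt_of_lt_of_le (by positivity) hlog
  have hkN : log N * k ≤ ε * β / 2 * N := calc
    log N * k ≤ log N * ((log N)⁻¹ ^ 2 * N) := mul_le_mul_of_nonneg_left hk hlog0.le
    _ = (log N)⁻¹ * N := by field_simp
    _ ≤ ε * β / 2 * N := by
        gcongr
        simpa only [inv_div] using inv_anti₀ (by positivity) hlog
  have hβN : β ≤ ε * β / 2 * N := by
    have := (div_le_iff₀ hε).1 hN
    nlinarith
  linarith

theorem stmt15_general (Ω : ℕ → Type) (mΩ : ∀ m, MeasurableSpace (Ω m))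
    (μ : ∀ m, Measure (Ω m))
    (B : ∀ m, Fin m → Ω m → ℝ) (q : ∀ m, Fin m → ℝ) (p : ℕ → ℝ) (β : ℝ)
    (hβ : 0 < β)
    (hq : ∀ m l, p m * β ≤ q m l ∧ q m l ≤ p m)
    (hmeas : ∀ m l, Measurable (B m l))
    (h01 : ∀ m l ω, B m l ω = 0 ∨ B m l ω = 1)
    (hber : ∀ m l, μ m {ω | B m l ω = 1} = ENNReal.ofReal (q m l))
    (hindep : ∀ m, iIndepFun (B m) (μ m))
    (hgrow : Tendsto (fun m : ℕ => (m * p m) / Real.log m) atTop atTop) :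
    ∀ ε : ℝ, 0 < ε → ∃ m0 : ℕ, ∀ m, m0 ≤ m → ∀ k : ℕ,
      (k : ℝ) ≤ (Real.log (m * p m))⁻¹ ^ 2 * (m * p m) →
      μ m {ω | (∑ l, B m l ω) = (k : ℝ)}
        ≤ ENNReal.ofReal (Real.exp (-(1 - ε) * (m * p m) * β)) := by
  intro ε hε
  have hN : Tendsto (fun m : ℕ => (m : ℝ) * p m) atTop atTop :=
    hgrow.atTop_of_div_atTop (tendsto_log_atTop.comp tendsto_natCast_atTop_atTop)
  obtain ⟨m0, hm0⟩ := eventually_atTop.1 <|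
    (hN.eventually (eventually_log_mul_sub_le hβ hε)).and (hN.eventually_ge_atTop 1)
  refine ⟨m0, fun m hm k hk => ?_⟩
  obtain ⟨hexponent, hN1⟩ := hm0 m hm
  set N := (m : ℝ) * p m with hNdef
  have ha : ∀ l, p m * β ≤ (μ m).real {ω | B m l ω = 1} := fun l => by
    rw [measureReal_def, hber, ENNReal.toReal_ofReal']
    exact (hq m l).1.trans (le_max_left _ _)
  have hchernoff := measureReal_sum_le_le_exp (hindep m) (hmeas m) (h01 m) ha
    (neg_nonpos.2 (log_nonneg hN1)) k
  have hrate : -(-log N) * k - (1 - exp (-log N)) * Fintype.card (Fin m) * (p m * β)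
      = log N * k - (N - 1) * β := by
    rw [exp_neg, exp_log (by linarith), Fintype.card_fin]
    field_simp
    ring
  have := (hindep m).isProbabilityMeasure
  calc μ m {ω | ∑ l, B m l ω = k} ≤ μ m {ω | ∑ l, B m l ω ≤ k} :=
        measure_mono fun ω h => le_of_eq h
    _ = ENNReal.ofReal ((μ m).real {ω | ∑ l, B m l ω ≤ k}) := (ofReal_measureReal).symm
    _ ≤ ENNReal.ofReal (exp (-(1 - ε) * N * β)) := ENNReal.ofReal_le_ofReal <|
        hchernoff.trans (exp_le_exp.2 (hrate ▸ hexponent k hk))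

theorem stmt15 (Ω : ℕ → Type) (mΩ : ∀ m, MeasurableSpace (Ω m))
    (μ : ∀ m, Measure (Ω m)) (hprob : ∀ m, IsProbabilityMeasure (μ m))
    (B : ∀ m, Fin m → Ω m → ℝ) (q : ∀ m, Fin m → ℝ) (p : ℕ → ℝ) (β : ℝ)
    (hβ : 0 < β) (hβ1 : β ≤ 1)
    (hp : ∀ m, 0 < p m ∧ p m < 1)
    (hq : ∀ m l, p m * β ≤ q m l ∧ q m l ≤ p m)
    (hmeas : ∀ m l, Measurable (B m l))
    (h01 : ∀ m l ω, B m l ω = 0 ∨ B m l ω = 1)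
    (hber : ∀ m l, μ m {ω | B m l ω = 1} = ENNReal.ofReal (q m l))
    (hindep : ∀ m, iIndepFun (B m) (μ m))
    (hgrow : Tendsto (fun m : ℕ => (m * p m) / Real.log m) atTop atTop) :
    ∀ ε : ℝ, 0 < ε → ∃ m0 : ℕ, ∀ m, m0 ≤ m → ∀ k : ℕ,
      (k : ℝ) ≤ (Real.log (m * p m))⁻¹ ^ 2 * (m * p m) →
      μ m {ω | (∑ l, B m l ω) = (k : ℝ)}
        ≤ ENNReal.ofReal (Real.exp (-(1 - ε) * (m * p m) * β)) :=
  stmt15_general Ω mΩ μ B q p β hβ hq hmeas h01 hber hindep hgrow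
end

section
/- Let $X=\sum_{l=1}^m B_l$ with $B_l$ independent Bernoulli, $p\beta\le \mathbb{P}(B_l=1)\le p$, $\beta\in(0,1]$, and suppose $mp=\omega(\log m)$. Let $M>e^2/(1-p\beta)$ be a constant. Then for every integer $k\ge M m p$, $\mathbb{P}(X=k)\le \exp(-mp\beta(1+o(1)))$; i.e., for every $\epsilon>0$ there is $m_0$ such that for all $m\ge m_0$ and all $k\ge Mmp$, $\mathbb{P}(X=k)\le \exp(-(1-\epsilon)mp\beta)$. -/
/-!
If `X` is a sum of independent indicators, each equal to `1` with probability at most `p`, then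
`X = k` forces some `k` of them to be `1`, so `P(X = k) ≤ C(m, k) pᵏ ≤ (mp)ᵏ / k!`.
Once `k ≥ e² mp` (which `M > e² / (1 - pβ) ≥ e²` guarantees), `kᵏ / k! ≤ eᵏ` gives
`(mp)ᵏ / k! ≤ e⁻ᵏ ≤ e^{-mp} ≤ e^{-(1-ε) mpβ}`, already for every `m`.
-/

open MeasureTheory ProbabilityTheory Filter Finset
open scoped ENNReal

section Indicators

variable {Ω ι : Type*} [Fintype ι] {B : ι → Ω → ℝ}

lemma setOf_sum_eq_subset_biUnion_powersetCard (h01 : ∀ l ω, B l ω = 0 ∨ B l ω = 1) (k : ℕ) :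
    {ω | ∑ l, B l ω = k} ⊆ ⋃ S ∈ powersetCard k (univ : Finset ι), ⋂ l ∈ S, B l ⁻¹' {1} := by
  classical
  intro ω hω
  have hsum : ∑ l, B l ω = #{l | B l ω = 1} := by
    rw [natCast_card_filter]
    refine sum_congr rfl fun l _ => ?_
    rcases h01 l ω with h | h <;> simp [h]
  have hcard : #{l | B l ω = 1} = k := by exact_mod_cast hsum.symm.trans hω
  refine Set.mem_biUnion (mem_powersetCard.mpr ⟨subset_univ _, hcard⟩) ?_
  exact Set.mem_biInter fun l hl => (mem_filter.mp hl).2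

theorem measure_sum_eq_le_choose_mul_pow [MeasurableSpace Ω] {μ : Measure Ω} (h01 : ∀ l ω, B l ω = 0 ∨ B l ω = 1)
    (hindep : iIndepFun B μ) {r : ℝ≥0∞} (hr : ∀ l, μ {ω | B l ω = 1} ≤ r) (k : ℕ) :
    μ {ω | ∑ l, B l ω = k} ≤ (Fintype.card ι).choose k * r ^ k := by
  have hinter : ∀ S ∈ powersetCard k (univ : Finset ι), μ (⋂ l ∈ S, B l ⁻¹' {1}) ≤ r ^ k := by
    intro S hS
    rw [hindep.measure_inter_preimage_eq_mul S fun _ _ => measurableSet_singleton 1,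
      ← (mem_powersetCard.mp hS).2, ← prod_const]
    exact prod_le_prod' fun l _ => hr l
  calc μ {ω | ∑ l, B l ω = k}
      ≤ ∑ S ∈ powersetCard k (univ : Finset ι), μ (⋂ l ∈ S, B l ⁻¹' {1}) :=
        (measure_mono (setOf_sum_eq_subset_biUnion_powersetCard h01 k)).trans
          (measure_biUnion_finset_le _ _)
    _ ≤ ∑ _S ∈ powersetCard k (univ : Finset ι), r ^ k := sum_le_sum hinter
    _ = (Fintype.card ι).choose k * r ^ k := by
        rw [sum_const, card_powersetCard, card_univ, nsmul_eq_mul]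

end Indicators

lemma choose_mul_pow_le_pow_div_factorial (n k : ℕ) {x : ℝ} (hx : 0 ≤ x) :
    n.choose k * x ^ k ≤ (n * x) ^ k / k.factorial := by
  calc n.choose k * x ^ k ≤ (n : ℝ) ^ k / k.factorial * x ^ k := by
        gcongr
        exact Nat.choose_le_pow_div k n
    _ = (n * x) ^ k / k.factorial := by ring

lemma pow_div_factorial_le_exp_neg {y : ℝ} {k : ℕ} (hy : 0 ≤ y) (hk : Real.exp 2 * y ≤ k) :
    y ^ k / k.factorial ≤ Real.exp (-k) := by
  have hy' : y ≤ k / Real.exp 2 := by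
    rw [le_div_iff₀ (Real.exp_pos 2)]
    linarith
  calc y ^ k / k.factorial ≤ (k / Real.exp 2) ^ k / k.factorial := by gcongr
    _ = (k : ℝ) ^ k / k.factorial / Real.exp 2 ^ k := by rw [div_pow]; ring
    _ ≤ Real.exp k / Real.exp 2 ^ k := by
        gcongr
        exact Real.pow_div_factorial_le_exp _ k.cast_nonneg k
    _ = Real.exp (-k) := by
        rw [← Real.exp_nat_mul, ← Real.exp_sub]
        ring_nf

theorem stmt16_general (Ω : ℕ → Type) (mΩ : ∀ m, MeasurableSpace (Ω m))
    (μ : ∀ m, Measure (Ω m))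
    (B : ∀ m, Fin m → Ω m → ℝ) (q : ∀ m, Fin m → ℝ) (p : ℕ → ℝ) (β M : ℝ)
    (hβ : 0 < β) (hβ1 : β ≤ 1)
    (hp : ∀ m, 0 < p m ∧ p m < 1)
    (hM : ∀ m, Real.exp 2 / (1 - p m * β) < M)
    (hq : ∀ m l, p m * β ≤ q m l ∧ q m l ≤ p m)
    (h01 : ∀ m l ω, B m l ω = 0 ∨ B m l ω = 1)
    (hber : ∀ m l, μ m {ω | B m l ω = 1} = ENNReal.ofReal (q m l))
    (hindep : ∀ m, iIndepFun (B m) (μ m)) :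
    ∀ ε : ℝ, 0 < ε → ∃ m0 : ℕ, ∀ m, m0 ≤ m → ∀ k : ℕ,
      M * (m * p m) ≤ (k : ℝ) →
      μ m {ω | (∑ l, B m l ω) = (k : ℝ)}
        ≤ ENNReal.ofReal (Real.exp (-(1 - ε) * (m * p m) * β)) := by
  intro ε hε
  refine ⟨0, fun m _ k hk => ?_⟩
  obtain ⟨hp0, hp1⟩ := hp m
  have hmp : 0 ≤ (m : ℝ) * p m := by positivity
  have hpβ : 0 < 1 - p m * β := by nlinarith
  have hM2 : Real.exp 2 ≤ M :=
    (le_div_self (Real.exp_pos 2).le hpβ (by nlinarith)).trans (hM m).le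
  have hk2 : Real.exp 2 * (m * p m) ≤ k := (mul_le_mul_of_nonneg_right hM2 hmp).trans hk
  have hprob_le := measure_sum_eq_le_choose_mul_pow (h01 m) (hindep m)
    (fun l => (hber m l).trans_le (ENNReal.ofReal_le_ofReal (hq m l).2)) k
  rw [Fintype.card_fin, ← ENNReal.ofReal_pow hp0.le, ← ENNReal.ofReal_natCast,
    ← ENNReal.ofReal_mul (by positivity)] at hprob_le
  refine hprob_le.trans (ENNReal.ofReal_le_ofReal ?_)
  calc (m.choose k : ℝ) * p m ^ k ≤ (m * p m) ^ k / k.factorial :=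
        choose_mul_pow_le_pow_div_factorial m k hp0.le
    _ ≤ Real.exp (-k) := pow_div_factorial_le_exp_neg hmp hk2
    _ ≤ Real.exp (-(1 - ε) * (m * p m) * β) := by
        have hmpβ : 0 ≤ (m : ℝ) * p m * β := by positivity
        have he2 : 1 ≤ Real.exp 2 := Real.one_le_exp (by norm_num)
        gcongr
        nlinarith [mul_le_mul_of_nonneg_left hβ1 hmp, mul_le_mul_of_nonneg_right he2 hmp]

theorem stmt16 (Ω : ℕ → Type) (mΩ : ∀ m, MeasurableSpace (Ω m))
    (μ : ∀ m, Measure (Ω m)) (hprob : ∀ m, IsProbabilityMeasure (μ m))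
    (B : ∀ m, Fin m → Ω m → ℝ) (q : ∀ m, Fin m → ℝ) (p : ℕ → ℝ) (β M : ℝ)
    (hβ : 0 < β) (hβ1 : β ≤ 1)
    (hp : ∀ m, 0 < p m ∧ p m < 1)
    (hM : ∀ m, Real.exp 2 / (1 - p m * β) < M)
    (hq : ∀ m l, p m * β ≤ q m l ∧ q m l ≤ p m)
    (hmeas : ∀ m l, Measurable (B m l))
    (h01 : ∀ m l ω, B m l ω = 0 ∨ B m l ω = 1)
    (hber : ∀ m l, μ m {ω | B m l ω = 1} = ENNReal.ofReal (q m l))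
    (hindep : ∀ m, iIndepFun (B m) (μ m))
    (hgrow : Tendsto (fun m : ℕ => (m * p m) / Real.log m) atTop atTop) :
    ∀ ε : ℝ, 0 < ε → ∃ m0 : ℕ, ∀ m, m0 ≤ m → ∀ k : ℕ,
      M * (m * p m) ≤ (k : ℝ) →
      μ m {ω | (∑ l, B m l ω) = (k : ℝ)}
        ≤ ENNReal.ofReal (Real.exp (-(1 - ε) * (m * p m) * β)) :=
  stmt16_general Ω mΩ μ B q p β M hβ hβ1 hp hM hq h01 hber hindep
end
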